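/- arXiv:2603.11802 — 3 statements merged into one kernel-verified Lean document; each statement's English description precedes it below -/
import Mathlib

section
/- For every MPOMDP ⟨I,S,Ā,Ō,T,O,R⟩ there exists an SDec-POMDP ⟨I,S,Ā,Ō,F,T',O',R⟩ with the same agents, states, joint actions, joint observations, and reward, with T'(s'|s,ā,τ̄) = T(s'|s,ā) and O'(ō'|s',ā,τ̄) = O(ō'|s',ā) for all sojourn-time vectors τ̄, and with F deterministic assigning τ'_i = 1 to every agent i in every state (so that every agent communicates at every subsequent decision epoch and the selector functions return the full joint action ā and joint observation ō to every agent and to the blackboard at each step); conversely, every SDec-POMDP reduces to an MPOMDP obtained by adjoining one blackboard agent with τ = 0 at all times, augmenting the state space to S × (ℝ≥0)^n so as to carry τ̄, augmenting the joint observation space by the sequences of shared action–observation pairs ∏_i (A_iO_i)*, and setting T'(⟨s',τ̄'⟩ | ⟨s,τ̄⟩, ā, ā') = F(τ̄' | s',ā',τ̄)·T(s' | s,ā,τ̄). Hence the SDec-POMDP and MPOMDP models are equivalent. -/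
/-!
Statement 0: SDec-POMDP and MPOMDP models are equivalent (mutual reduction).
-/

open scoped NNReal

/-- A multiagent POMDP `⟨I,S,Ā,Ō,T,O,R⟩` over a (finite) set `I` of agents, a
(finite) state set `S`, per-agent action sets `A i` and observation sets `O i`,
given by a transition kernel `T(s'∣s,ā)`, a joint observation kernel
`O(ō'∣s',ā)` and a reward function `R : S × Ā → ℝ`. -/
structure MPOMDP (I S : Type) (A O : I → Type) where
  T : S → (∀ i, A i) → PMF S
  Obs : S → (∀ i, A i) → PMF (∀ i, O i)
  R : S → (∀ i, A i) → ℝ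

/-- A semi-decentralized POMDP `⟨I,S,Ā,Ō,F,T,O,R⟩`: the transition and
observation kernels may depend on the sojourn-time vector `τ̄ ∈ (ℝ≥0)^I`;
`F` is the sojourn-time kernel giving the distribution of the next sojourn-time
vector conditioned on `(s', ā', τ̄)`; and the selector functions
`f (fSel/fSelC)`, `g (gSel/gSelC)`, `h (hSel/hSelC)` route (pieces of) the
blackboard memory, the joint action and the joint observation to each agent `i`
and to the blackboard. -/
structure SDecPOMDP (I S : Type) (A O : I → Type) where
  F : S → (∀ i, A i) → (I → ℝ≥0) → PMF (I → ℝ≥0)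
  T : S → (∀ i, A i) → (I → ℝ≥0) → PMF S
  Obs : S → (∀ i, A i) → (I → ℝ≥0) → PMF (∀ i, O i)
  R : S → (∀ i, A i) → ℝ
  fSel : (I → ℝ≥0) → I → List (∀ j, Option (A j × O j)) →
    Option (List (∀ j, Option (A j × O j)))
  fSelC : (I → ℝ≥0) → (∀ j, List (A j × O j)) → (∀ j, Option (List (A j × O j)))
  gSel : (I → ℝ≥0) → I → (∀ j, A j) → (∀ j, Option (A j))
  gSelC : (I → ℝ≥0) → (∀ j, A j) → (∀ j, Option (A j))
  hSel : (I → ℝ≥0) → I → (∀ j, O j) → (∀ j, Option (O j))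
  hSelC : (I → ℝ≥0) → (∀ j, O j) → (∀ j, Option (O j))

/-- Action sets of the agent set augmented with one blackboard agent (`none`),
whose action set is trivial. -/
def extA (I : Type) (A : I → Type) : Option I → Type
  | none => Unit
  | some i => A i

/-- Observation sets of the augmented agent set: the extra blackboard agent
observes the shared sequences of action–observation pairs `∏ i, (A_i O_i)*`,
so the joint observation space is `Ō × ∏ i, (A_i O_i)*`. -/
def extO (I : Type) (A O : I → Type) : Option I → Type
  | none => ∀ i, List (A i × O i)
  | some i => O i

/-- (1) Every MPOMDP embeds into an SDec-POMDP with the same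
agents, states, joint actions, joint observations and reward, with
`T'(s'∣s,ā,τ̄) = T(s'∣s,ā)`, `O'(ō'∣s',ā,τ̄) = O(ō'∣s',ā)`, a deterministic
sojourn-time kernel assigning `τ'_i = 1` to every agent in every state, and
selector functions returning the full joint action `ā` and joint observation
`ō` to every agent and to the blackboard at each step.  (2) Conversely, every
SDec-POMDP reduces to an MPOMDP obtained by adjoining one blackboard agent,
augmenting the state space to `S × (ℝ≥0)^I` so as to carry `τ̄`, augmenting the
joint observation space by the sequences of shared action–observation pairs,
and setting `T'(⟨s',τ̄'⟩ ∣ ⟨s,τ̄⟩, ā) = F(τ̄' ∣ s',ā,τ̄) · T(s' ∣ s,ā,τ̄)`.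
Hence the SDec-POMDP and MPOMDP models are equivalent. -/
theorem sdecpomdp_mpomdp_model_equivalence :
    (∀ (I S : Type) (A O : I → Type) [Fintype I] [Fintype S]
        [∀ i, Fintype (A i)] [∀ i, Fintype (O i)],
      ∀ M : MPOMDP I S A O,
        ∃ D : SDecPOMDP I S A O,
          D.R = M.R ∧
          (∀ s a τ, D.T s a τ = M.T s a) ∧
          (∀ s a τ, D.Obs s a τ = M.Obs s a) ∧
          (∀ s a τ, D.F s a τ = PMF.pure fun _ => (1 : ℝ≥0)) ∧
          (∀ τ i a, D.gSel τ i a = fun j => some (a j)) ∧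
          (∀ τ a, D.gSelC τ a = fun j => some (a j)) ∧
          (∀ τ i o, D.hSel τ i o = fun j => some (o j)) ∧
          (∀ τ o, D.hSelC τ o = fun j => some (o j))) ∧
    (∀ (I S : Type) (A O : I → Type) [Fintype I] [Fintype S]
        [∀ i, Fintype (A i)] [∀ i, Fintype (O i)],
      ∀ D : SDecPOMDP I S A O,
        ∃ M : MPOMDP (Option I) (S × (I → ℝ≥0)) (extA I A) (extO I A O),
          (∀ (s : S) (τ : I → ℝ≥0) (a : ∀ j, extA I A j) (s' : S) (τ' : I → ℝ≥0),
            M.T (s, τ) a (s', τ') =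
              D.F s' (fun i => a (some i)) τ τ' *
                D.T s (fun i => a (some i)) τ s') ∧
          (∀ (s' : S) (τ' : I → ℝ≥0) (a : ∀ j, extA I A j),
            (M.Obs (s', τ') a).map (fun o i => o (some i)) =
              D.Obs s' (fun i => a (some i)) τ') ∧
          (∀ (s : S) (τ : I → ℝ≥0) (a : ∀ j, extA I A j),
            M.R (s, τ) a = D.R s (fun i => a (some i)))) := by
  constructor
  · intro I S A O _ _ _ _ M
    refine ⟨{ F := fun _ _ _ => PMF.pure fun _ => (1 : ℝ≥0)
              T := fun s a _ => M.T s a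
              Obs := fun s a _ => M.Obs s a
              R := M.R
              fSel := fun _ _ l => some l
              fSelC := fun _ x j => some (x j)
              gSel := fun _ _ a j => some (a j)
              gSelC := fun _ a j => some (a j)
              hSel := fun _ _ o j => some (o j)
              hSelC := fun _ o j => some (o j) }, ?_, ?_, ?_, ?_, ?_, ?_, ?_, ?_⟩ <;>
      intros <;> rfl
  · intro I S A O _ _ _ _ D
    classical
    refine ⟨{ T := fun p a =>
                (D.T p.1 (fun i => a (some i)) p.2).bind fun s' =>
                  (D.F s' (fun i => a (some i)) p.2).map fun τ' => (s', τ')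
              Obs := fun p a =>
                (D.Obs p.1 (fun i => a (some i)) p.2).map fun o j =>
                  match j with
                  | none => fun _ => []
                  | some i => o i
              R := fun p a => D.R p.1 (fun i => a (some i)) }, ?_, ?_, ?_⟩
    · intro s τ a s' τ'
      simp only [PMF.bind_apply]
      have hmap : ∀ s'' : S,
          ((D.F s'' (fun i => a (some i)) τ).map fun τ'' => (s'', τ'')) (s', τ') =
            if s'' = s' then D.F s' (fun i => a (some i)) τ τ' else 0 := by
        intro s''
        by_cases h : s'' = s'
        · subst h
          rw [PMF.map_apply,
            tsum_eq_single τ' (fun b hb => by simp [Prod.ext_iff, Ne.symm hb])]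
          simp
        · simp only [PMF.map_apply, Prod.mk.injEq, if_neg h]
          simp [Ne.symm h]
      calc (∑' s'', D.T s (fun i => a (some i)) τ s'' *
              ((D.F s'' (fun i => a (some i)) τ).map fun τ'' => (s'', τ'')) (s', τ'))
          = ∑' s'', if s'' = s' then D.T s (fun i => a (some i)) τ s'' *
              D.F s' (fun i => a (some i)) τ τ' else 0 := by
            refine tsum_congr fun s'' => ?_
            rw [hmap]
            by_cases h : s'' = s' <;> simp [h]
        _ = D.T s (fun i => a (some i)) τ s' * D.F s' (fun i => a (some i)) τ τ' := by
            rw [tsum_eq_single s' (by intro b hb; simp [hb])]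
            simp
        _ = _ := mul_comm _ _
    · intro s' τ' a
      rw [PMF.map_comp]
      have : ((fun (o : ∀ i, O i) (i : I) => o i)) = id := rfl
      exact (PMF.map_id _)
    · intro s τ a
      rfl
end

section
/- SDec-POMDP and MPOMDP model-policy-objective structures are equivalent: under the construction in which all agents communicate at every epoch (τ'_i = 1 deterministically), memory selectors return the joint memory, the blackboard memory update enforces m_c' = m_c·ā^sel·ō^sel, each local memory update enforces m_i' = m_i·a_i^sel·o_i^sel, and ψ(ā | m_c, m̄, s) = 1 exactly when ā = π(h̄), the semi-decentralized value satisfies, for every joint history h̄ and initial belief b⁰, V^{π_c,π̄}(m_c, m̄, s) = V^π(s, h̄), where V^π obeys the standard value recursion V^π(s,h̄) = R(s,π(h̄)) + γ Σ_{s'∈S} Σ_{ō'∈Ō} Pr(s',ō' | s,π(h̄)) V^π(s',h̄') with Pr(s',ō'|s,ā) = T(s'|s,ā)·O(ō'|s',ā). -/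
/-!
Statement 2: SDec-POMDP and MPOMDP model-policy-objective structures are
equivalent: under the fully-communicating construction, the semi-decentralized
value function equals the MPOMDP value function on every joint history and
every initial belief.
-/

open scoped NNReal

/-- Joint action–observation histories `h̄ ∈ (Ā Ō)*`. -/
abbrev JointHist (I : Type) (A O : I → Type) := List ((∀ i, A i) × (∀ i, O i))

section

variable {I S : Type} {A O : I → Type}
variable [Fintype I] [DecidableEq I] [Fintype S]
  [∀ i, Fintype (A i)] [∀ i, Fintype (O i)]

/-- The standard MPOMDP value recursion
`V^π(s,h̄) = R(s,π(h̄)) + γ Σ_{s'} Σ_{ō'} Pr(s',ō' ∣ s,π(h̄)) V^π(s',h̄')`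
with `Pr(s',ō'∣s,ā) = T(s'∣s,ā)·O(ō'∣s',ā)` (horizon-indexed). -/
noncomputable def mpomdpValue (M : MPOMDP I S A O) (γ : ℝ)
    (π : JointHist I A O → ∀ i, A i) : ℕ → S → JointHist I A O → ℝ
  | 0, _, _ => 0
  | n + 1, s, h =>
      M.R s (π h) +
        γ * ∑ s' : S, ∑ o' : (∀ i, O i),
          (M.T s (π h) s').toReal * (M.Obs s' (π h) o').toReal *
            mpomdpValue M γ π n s' (h ++ [(π h, o')])

/-- The semi-decentralized value recursion
`V^{π_c,π̄}(m_c,m̄,s) = Σ_ā ψ(ā∣m_c,m̄)[R(s,ā) + γ Σ_τ̄ F(dτ̄∣s,ā) Σ_{s'} T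
  Σ_{ō'} O Σ_{m_c'} η_c(·) Σ_{m̄'} ∏_i η(·) V^{π_c,π̄}(m_c',m̄',s')]`
(horizon-indexed), with blackboard memories `m_c`, agent memories `m̄`,
action-selection distribution `ψ`, sojourn-time kernel `F`, and deterministic
memory-update distributions `η_c`, `η`. -/
noncomputable def sdecValue (M : MPOMDP I S A O) (γ : ℝ)
    (F : S → (∀ i, A i) → PMF (I → ℝ≥0))
    (ψ : JointHist I A O → (∀ i, List (A i × O i)) → PMF (∀ i, A i))
    (ηc : JointHist I A O → (∀ i, A i) → (∀ i, O i) → PMF (JointHist I A O))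
    (ηa : ∀ i, List (A i × O i) → (∀ i, A i) → (∀ i, O i) → PMF (List (A i × O i))) :
    ℕ → JointHist I A O → (∀ i, List (A i × O i)) → S → ℝ
  | 0, _, _, _ => 0
  | n + 1, mc, m, s =>
      ∑ a : (∀ i, A i), (ψ mc m a).toReal *
        (M.R s a +
          γ * ∑' τ : (I → ℝ≥0), (F s a τ).toReal *
            ∑ s' : S, ∑ o' : (∀ i, O i),
              (M.T s a s').toReal * (M.Obs s' a o').toReal *
                ∑' mc' : JointHist I A O, (ηc mc a o' mc').toReal *
                  ∑' m' : (∀ i, List (A i × O i)),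
                    (∏ i, (ηa i (m i) a o' (m' i)).toReal) *
                      sdecValue M γ F ψ ηc ηa n mc' m' s')


private lemma tsum_pure_mul' {α : Type} (x : α) (f : α → ℝ) :
    ∑' a, ((PMF.pure x) a).toReal * f a = f x := by
  classical
  rw [tsum_eq_single x]
  · simp [PMF.pure_apply]
  · intro b hb; simp [PMF.pure_apply, hb]

private lemma sum_pure_mul' {α : Type} [Fintype α] (x : α) (f : α → ℝ) :
    ∑ a : α, ((PMF.pure x) a).toReal * f a = f x := by
  classical
  rw [Finset.sum_eq_single x]
  · simp [PMF.pure_apply]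
  · intro b _ hb; simp [PMF.pure_apply, hb]
  · intro hx; exact absurd (Finset.mem_univ x) hx

private lemma tsum_prod_pure_mul' {I : Type} [Fintype I] {β : I → Type}
    (t : ∀ i, β i) (f : (∀ i, β i) → ℝ) :
    ∑' m : (∀ i, β i), (∏ i, ((PMF.pure (t i)) (m i)).toReal) * f m = f t := by
  classical
  rw [tsum_eq_single t]
  · simp [PMF.pure_apply]
  · intro b hb
    obtain ⟨i, hi⟩ := Function.ne_iff.mp hb
    rw [Finset.prod_eq_zero (Finset.mem_univ i)]
    · ring
    · simp [PMF.pure_apply, hi]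

/-- Under the construction in which all agents communicate at
every epoch (`τ'_i = 1` deterministically), the blackboard memory update
enforces `m_c' = m_c·ā·ō`, each local memory update enforces
`m_i' = m_i·a_i·o_i`, and `ψ(ā ∣ m_c,m̄,s) = 1` exactly when `ā = π(h̄)` (with
`m_c = h̄`), the semi-decentralized value equals the MPOMDP value `V^π(s,h̄)`
for every joint history `h̄`, and hence for every initial belief `b⁰`. -/
theorem sdecpomdp_mpomdp_value_equivalence
    (M : MPOMDP I S A O) (γ : ℝ) (π : JointHist I A O → ∀ i, A i)
    (F : S → (∀ i, A i) → PMF (I → ℝ≥0))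
    (ψ : JointHist I A O → (∀ i, List (A i × O i)) → PMF (∀ i, A i))
    (ηc : JointHist I A O → (∀ i, A i) → (∀ i, O i) → PMF (JointHist I A O))
    (ηa : ∀ i, List (A i × O i) → (∀ i, A i) → (∀ i, O i) → PMF (List (A i × O i)))
    (hF : ∀ s a, F s a = PMF.pure fun _ => (1 : ℝ≥0))
    (hψ : ∀ mc m, ψ mc m = PMF.pure (π mc))
    (hηc : ∀ mc a o, ηc mc a o = PMF.pure (mc ++ [(a, o)]))
    (hηa : ∀ i mi a o, ηa i mi a o = PMF.pure (mi ++ [(a i, o i)])) :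
    (∀ (n : ℕ) (h : JointHist I A O) (m : ∀ i, List (A i × O i)) (s : S),
        sdecValue M γ F ψ ηc ηa n h m s = mpomdpValue M γ π n s h) ∧
    (∀ (n : ℕ) (h : JointHist I A O) (m : ∀ i, List (A i × O i)) (b0 : S → ℝ),
        ∑ s : S, b0 s * sdecValue M γ F ψ ηc ηa n h m s =
          ∑ s : S, b0 s * mpomdpValue M γ π n s h) := by
  have key : ∀ (n : ℕ) (h : JointHist I A O) (m : ∀ i, List (A i × O i)) (s : S),
      sdecValue M γ F ψ ηc ηa n h m s = mpomdpValue M γ π n s h := by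
    intro n
    induction n with
    | zero => intro h m s; simp [sdecValue, mpomdpValue]
    | succ n ih =>
      intro h m s
      simp only [sdecValue, mpomdpValue, hψ, hF, hηc, hηa,
        sum_pure_mul', tsum_pure_mul', tsum_prod_pure_mul', ih]
  exact ⟨key, fun n h m b0 => by simp only [key]⟩

end
end

section
/- For every Dec-POMDP ⟨I,S,Ā,Ō,T,O,R⟩ there exists an SDec-POMDP ⟨I,S,Ā,Ō,F,T',O',R⟩ with the same agents, states, joint actions, joint observations, and reward, with T'(s'|s,ā,τ̄) = T(s'|s,ā) and O'(ō'|s',ā,τ̄) = O(ō'|s',ā), whose selector functions satisfy g'(a_i^sel) = a_i and h'(o_i^sel) = o_i for every agent i and assign the empty set to the blackboard (g'(a_c^sel) = h'(o_c^sel) = ∅), so that τ̄ has no effect and F may be disregarded; conversely every SDec-POMDP reduces to a Dec-POMDP by adjoining a blackboard agent with τ = 0, augmenting the state space to S × (ℝ≥0)^n, augmenting the joint observation space by ∏_i (A_iO_i)*, and setting T'(⟨s',τ̄'⟩ | ⟨s,τ̄⟩, ā, ā') = F(τ̄' | s',ā',τ̄)·T(s' | s,ā,τ̄). Hence the SDec-POMDP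 and Dec-POMDP models are equivalent. -/
/-!
A Dec-POMDP is the SDec-POMDP whose sojourn times never change and whose selectors hand each
agent exactly its own action and observation and the blackboard nothing, so `τ̄` is inert.
Conversely, an SDec-POMDP becomes a Dec-POMDP once the sojourn-time vector is moved into the
state: drawing `s'` from `T(· ∣ s,ā,τ̄)` and then `τ̄'` from `F(· ∣ s',ā,τ̄)` gives the joint
kernel `F · T`, and a blackboard agent is adjoined to carry the shared histories.
-/

open scoped NNReal

/-- A decentralized POMDP `⟨I,S,Ā,Ō,T,O,R⟩`: the same underlying model tuple as
the MPOMDP, but agents cannot explicitly share information. -/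
structure DecPOMDP (I S : Type) (A O : I → Type) where
  T : S → (∀ i, A i) → PMF S
  Obs : S → (∀ i, A i) → PMF (∀ i, O i)
  R : S → (∀ i, A i) → ℝ

theorem PMF.bind_map_prodMk_apply {α β : Type*} (p : PMF α) (q : α → PMF β) (a : α) (b : β) :
    (p.bind fun a' => (q a').map (Prod.mk a')) (a, b) = q a b * p a := by
  simp only [PMF.bind_apply, PMF.map_apply, Prod.ext_iff]
  rw [tsum_eq_single a fun a' ha' => by simp [Ne.symm ha'],
    tsum_eq_single b fun b' hb' => by simp [Ne.symm hb']]
  simp [mul_comm]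

section

variable {I S : Type} {A O : I → Type}

def selectOwn {α : I → Type} [DecidableEq I] (i : I) (x : ∀ j, α j) : ∀ j, Option (α j) :=
  Function.update (fun _ => none) i (some (x i))

theorem selectOwn_self {α : I → Type} [DecidableEq I] (i : I) (x : ∀ j, α j) :
    selectOwn i x i = some (x i) :=
  Function.update_self ..

theorem selectOwn_of_ne {α : I → Type} [DecidableEq I] {i j : I} (h : j ≠ i) (x : ∀ j, α j) :
    selectOwn i x j = none :=
  Function.update_of_ne h ..

noncomputable def DecPOMDP.toSDecPOMDP [DecidableEq I] (M : DecPOMDP I S A O) :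
    SDecPOMDP I S A O where
  F _ _ τ := PMF.pure τ
  T s a _ := M.T s a
  Obs s a _ := M.Obs s a
  R := M.R
  fSel _ _ _ := none
  fSelC _ _ _ := none
  gSel _ := selectOwn
  gSelC _ _ _ := none
  hSel _ := selectOwn
  hSelC _ _ _ := none

/-- The blackboard agent `none` is given empty action–observation histories. -/
def extendObs (o : ∀ i, O i) : ∀ j, extO I A O j
  | none => fun _ => []
  | some i => o i

theorem restrict_comp_extendObs :
    (fun o i => o (some i)) ∘ extendObs (A := A) (O := O) = id :=
  rfl

noncomputable def SDecPOMDP.toDecPOMDP (D : SDecPOMDP I S A O) :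
    DecPOMDP (Option I) (S × (I → ℝ≥0)) (extA I A) (extO I A O) where
  T p a := (D.T p.1 (fun i => a (some i)) p.2).bind fun s' =>
    (D.F s' (fun i => a (some i)) p.2).map (Prod.mk s')
  Obs p a := (D.Obs p.1 (fun i => a (some i)) p.2).map extendObs
  R p a := D.R p.1 (fun i => a (some i))

theorem SDecPOMDP.toDecPOMDP_T_apply (D : SDecPOMDP I S A O) (s : S) (τ : I → ℝ≥0)
    (a : ∀ j, extA I A j) (s' : S) (τ' : I → ℝ≥0) :
    D.toDecPOMDP.T (s, τ) a (s', τ') =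
      D.F s' (fun i => a (some i)) τ τ' * D.T s (fun i => a (some i)) τ s' :=
  PMF.bind_map_prodMk_apply ..

theorem SDecPOMDP.toDecPOMDP_Obs_map_restrict (D : SDecPOMDP I S A O) (s' : S)
    (τ' : I → ℝ≥0) (a : ∀ j, extA I A j) :
    (D.toDecPOMDP.Obs (s', τ') a).map (fun o i => o (some i)) =
      D.Obs s' (fun i => a (some i)) τ' := by
  rw [SDecPOMDP.toDecPOMDP, PMF.map_comp, restrict_comp_extendObs]
  exact PMF.map_id _

end

/-- (1) Every Dec-POMDP embeds into an SDec-POMDP with the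
same agents, states, joint actions, joint observations and reward, with
`T'(s'∣s,ā,τ̄) = T(s'∣s,ā)` and `O'(ō'∣s',ā,τ̄) = O(ō'∣s',ā)`, whose selector
functions return each agent its own action `a_i` and observation `o_i` only,
and assign the empty set to the blackboard (so `τ̄` has no effect and `F` can
be disregarded).  (2) Conversely every SDec-POMDP reduces to a Dec-POMDP by
adjoining a blackboard agent, augmenting the state space to `S × (ℝ≥0)^I`,
augmenting the joint observation space by `∏ i, (A_i O_i)*`, and setting
`T'(⟨s',τ̄'⟩ ∣ ⟨s,τ̄⟩, ā) = F(τ̄' ∣ s',ā,τ̄) · T(s' ∣ s,ā,τ̄)`.  Hence the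
SDec-POMDP and Dec-POMDP models are equivalent. -/
theorem sdecpomdp_decpomdp_model_equivalence :
    (∀ (I S : Type) (A O : I → Type) [Fintype I] [Fintype S]
        [∀ i, Fintype (A i)] [∀ i, Fintype (O i)],
      ∀ M : DecPOMDP I S A O,
        ∃ D : SDecPOMDP I S A O,
          D.R = M.R ∧
          (∀ s a τ, D.T s a τ = M.T s a) ∧
          (∀ s a τ, D.Obs s a τ = M.Obs s a) ∧
          (∀ τ i a, D.gSel τ i a i = some (a i) ∧
            ∀ j, j ≠ i → D.gSel τ i a j = none) ∧
          (∀ τ i o, D.hSel τ i o i = some (o i) ∧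
            ∀ j, j ≠ i → D.hSel τ i o j = none) ∧
          (∀ τ a j, D.gSelC τ a j = none) ∧
          (∀ τ o j, D.hSelC τ o j = none)) ∧
    (∀ (I S : Type) (A O : I → Type) [Fintype I] [Fintype S]
        [∀ i, Fintype (A i)] [∀ i, Fintype (O i)],
      ∀ D : SDecPOMDP I S A O,
        ∃ M : DecPOMDP (Option I) (S × (I → ℝ≥0)) (extA I A) (extO I A O),
          (∀ (s : S) (τ : I → ℝ≥0) (a : ∀ j, extA I A j) (s' : S) (τ' : I → ℝ≥0),
            M.T (s, τ) a (s', τ') =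
              D.F s' (fun i => a (some i)) τ τ' *
                D.T s (fun i => a (some i)) τ s') ∧
          (∀ (s' : S) (τ' : I → ℝ≥0) (a : ∀ j, extA I A j),
            (M.Obs (s', τ') a).map (fun o i => o (some i)) =
              D.Obs s' (fun i => a (some i)) τ') ∧
          (∀ (s : S) (τ : I → ℝ≥0) (a : ∀ j, extA I A j),
            M.R (s, τ) a = D.R s (fun i => a (some i)))) := by
  classical
  refine ⟨fun I S A O _ _ _ _ M => ?_, fun I S A O _ _ _ _ D => ?_⟩
  · refine ⟨M.toSDecPOMDP, rfl, fun _ _ _ => rfl, fun _ _ _ => rfl, ?_, ?_,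
      fun _ _ _ => rfl, fun _ _ _ => rfl⟩ <;>
    exact fun _ i x => ⟨selectOwn_self i x, fun _ hj => selectOwn_of_ne hj x⟩
  · exact ⟨D.toDecPOMDP, D.toDecPOMDP_T_apply, D.toDecPOMDP_Obs_map_restrict,
      fun _ _ _ => rfl⟩
end
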